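/- For every positive integer p, the p×p determinant det_{0≤i,j<p}(a_{i,j}) equals 2^{C(p,2)} Π_{j=0}^{p−1} j!, where a_{i,j} = (−1)^{(i+j)/2} H_{i+j}(0) = (i+j)!/((i+j)/2)! when i+j is even, and a_{i,j} = 0 when i+j is odd, and C(p,2) = p(p−1)/2. -/

import Mathlib

open scoped BigOperators

/-- The `k`-th physicists' Hermite polynomial, via
`H_k(z)/k! = Σ_m ((-1)^(k-m)/(k-m)!) (2z)^(2m-k)/(2m-k)!` (terms with negative
factorial arguments being zero). -/
noncomputable def hermiteH (k : ℕ) (z : ℝ) : ℝ :=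
  (k.factorial : ℝ) * ∑ m ∈ Finset.range (k+1),
    if k ≤ 2*m then ((-1:ℝ)^(k-m) / (k-m).factorial) * ((2*z)^(2*m-k) / (2*m-k).factorial)
    else 0

/-
The entries are `a_{i+j}`, where `a_s = s!/(s/2)!` for even `s` and `0` otherwise, are the
moments of the normalized weight `e^{-x²/4}`. The monic polynomials `P_k(x) = H_k(x/2)` are
orthogonal for this weight with `‖P_k‖² = 2^k k!`, so writing `x^i = Σ_k B_{ik} P_k(x)` with `B`
lower unitriangular factors the Hankel matrix as `B · diag(2^k k!) · Bᵀ`, and its determinant is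
`Π_k 2^k k!`. The entrywise identity `Σ_k B_{ik} 2^k k! B_{jk} = a_{i+j}` is checked directly, by
comparing the coefficients of `x^i` in `(1 + x)^{2n} = (2x + (1 + x²))^n`.
-/

open Finset Matrix Polynomial
open scoped Nat

lemma hermiteH_two_mul_zero (k : ℕ) : hermiteH (2 * k) 0 = (-1) ^ k * (2 * k)! / k ! := by
  rw [hermiteH, sum_eq_single k]
  · rw [if_pos le_rfl, show 2 * k - k = k by omega, Nat.sub_self, pow_zero, Nat.factorial_zero,
      Nat.cast_one, div_one, mul_one]
    ring
  · intro m _ hmk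
    split_ifs with h
    · simp [zero_pow (show 2 * m - 2 * k ≠ 0 by omega)]
    · rfl
  · exact fun hk => absurd (mem_range.mpr (by omega)) hk

lemma hermiteH_two_mul_add_one_zero (k : ℕ) : hermiteH (2 * k + 1) 0 = 0 := by
  rw [hermiteH, sum_eq_zero, mul_zero]
  intro m _
  split_ifs with h
  · simp [zero_pow (show 2 * m - (2 * k + 1) ≠ 0 by omega)]
  · rfl

noncomputable def hermiteMoment (s : ℕ) : ℝ := if Even s then (s ! : ℝ) / (s / 2)! else 0

lemma neg_one_pow_mul_hermiteH_zero (s : ℕ) :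
    (-1 : ℝ) ^ (s / 2) * hermiteH s 0 = hermiteMoment s := by
  obtain ⟨k, rfl | rfl⟩ := Nat.even_or_odd' s
  · rw [hermiteH_two_mul_zero, hermiteMoment, if_pos (even_two_mul k),
      Nat.mul_div_cancel_left k two_pos, ← mul_div_assoc, ← mul_assoc, ← pow_add, ← two_mul,
      pow_mul, neg_one_sq, one_pow, one_mul]
  · rw [hermiteH_two_mul_add_one_zero, mul_zero, hermiteMoment,
      if_neg (Nat.not_even_iff_odd.mpr (odd_two_mul_add_one k))]

theorem Nat.choose_two_mul_eq_sum (n i : ℕ) :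
    (2 * n).choose i = ∑ k ∈ range (n + 1),
      2 ^ k * n.choose k * if k ≤ i ∧ 2 ∣ i - k then (n - k).choose ((i - k) / 2) else 0 := by
  have hsq : (X + 1 : ℕ[X]) ^ (2 * n) = (C 2 * X + expand ℕ 2 (1 + X)) ^ n := by
    rw [pow_mul, map_add, expand_X, map_one, C_ofNat]
    ring
  have hcoeff := coeff_X_add_one_pow ℕ (2 * n) i
  rw [Nat.cast_id] at hcoeff
  rw [← hcoeff, hsq, add_pow, finsetSum_coeff]
  refine sum_congr rfl fun k _ => ?_
  rw [mul_pow, ← C_pow, ← map_pow, mul_assoc, mul_assoc, coeff_C_mul, ← C_eq_natCast,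
    ← mul_assoc, coeff_mul_C, coeff_X_pow_mul', coeff_expand two_pos, coeff_one_add_X_pow]
  simp only [Nat.cast_id, ← ite_and]
  ring

noncomputable def monomialHermiteCoeff (i k : ℕ) : ℝ :=
  if k ≤ i ∧ 2 ∣ i - k then (i ! : ℝ) / (k ! * ((i - k) / 2)!) else 0

lemma monomialHermiteCoeff_self (i : ℕ) : monomialHermiteCoeff i i = 1 := by
  simp [monomialHermiteCoeff, Nat.factorial_ne_zero]

lemma monomialHermiteCoeff_of_lt {i k : ℕ} (h : i < k) : monomialHermiteCoeff i k = 0 :=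
  if_neg fun hk => by omega

lemma monomialHermiteCoeff_mul_mul (k a b : ℕ) :
    monomialHermiteCoeff (k + 2 * a) k * (k ! * 2 ^ k) * monomialHermiteCoeff (k + 2 * b) k =
      (k + 2 * a)! * (k + 2 * b)! / (k + a + b)! *
        (2 ^ k * (k + a + b).choose k * (a + b).choose a) := by
  simp only [monomialHermiteCoeff, le_add_iff_nonneg_right, zero_le, Nat.add_sub_cancel_left,
    dvd_mul_right, and_self, if_true, Nat.mul_div_cancel_left _ two_pos]
  rw [Nat.cast_choose ℝ (by omega : k ≤ k + a + b), Nat.cast_choose ℝ (by omega : a ≤ a + b),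
    show k + a + b - k = a + b by omega, show a + b - a = b by omega]
  field_simp

lemma monomialHermiteCoeff_mul_mul_of_add_eq {i j n : ℕ} (h : i + j = 2 * n) (k : ℕ) :
    monomialHermiteCoeff i k * (k ! * 2 ^ k) * monomialHermiteCoeff j k =
      i ! * j ! / n ! * ((2 ^ k * n.choose k *
        if k ≤ i ∧ 2 ∣ i - k then (n - k).choose ((i - k) / 2) else 0 : ℕ) : ℝ) := by
  by_cases hk : k ≤ i ∧ 2 ∣ i - k ∧ k ≤ j
  · obtain ⟨a, rfl⟩ : ∃ a, i = k + 2 * a := ⟨(i - k) / 2, by omega⟩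
    obtain ⟨b, rfl⟩ : ∃ b, j = k + 2 * b := ⟨(j - k) / 2, by omega⟩
    obtain rfl : n = k + a + b := by omega
    rw [monomialHermiteCoeff_mul_mul, if_pos (by omega), Nat.add_sub_cancel_left,
      show k + a + b - k = a + b by omega, Nat.mul_div_cancel_left a two_pos]
    push_cast
    ring
  by_cases hik : k ≤ i ∧ 2 ∣ i - k
  · have hjk : j < k := by omega
    have htrinomial : n.choose k * (n - k).choose ((i - k) / 2) = 0 := by
      rcases lt_or_ge n k with hnk | hkn
      · rw [Nat.choose_eq_zero_of_lt hnk, zero_mul]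
      · rw [Nat.choose_eq_zero_of_lt (by omega : n - k < (i - k) / 2), mul_zero]
    rw [monomialHermiteCoeff_of_lt hjk, if_pos hik, Nat.mul_assoc, htrinomial]
    simp
  · simp [monomialHermiteCoeff, hik]

lemma sum_monomialHermiteCoeff_mul_mul {N i j : ℕ} (hi : i < N) (hj : j < N) :
    ∑ k ∈ range N, monomialHermiteCoeff i k * (k ! * 2 ^ k) * monomialHermiteCoeff j k =
      hermiteMoment (i + j) := by
  obtain ⟨n, hn⟩ | hodd := Nat.even_or_odd (i + j)
  · replace hn : i + j = 2 * n := by omega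
    have hvanish : ∀ k ≥ n + 1, (2 ^ k * n.choose k *
        if k ≤ i ∧ 2 ∣ i - k then (n - k).choose ((i - k) / 2) else 0) = 0 := fun k hk => by
      rw [Nat.choose_eq_zero_of_lt (by omega : n < k), mul_zero, zero_mul]
    rw [sum_congr rfl fun k _ => monomialHermiteCoeff_mul_mul_of_add_eq hn k, ← mul_sum,
      ← Nat.cast_sum, eventually_constant_sum hvanish (by omega : n + 1 ≤ N),
      ← Nat.choose_two_mul_eq_sum, Nat.cast_choose ℝ (by omega : i ≤ 2 * n), hermiteMoment, hn,
      if_pos (even_two_mul n), Nat.mul_div_cancel_left n two_pos, show 2 * n - i = j by omega]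
    field_simp
  · rw [hermiteMoment, if_neg (Nat.not_even_iff_odd.mpr hodd)]
    refine sum_eq_zero fun k _ => ?_
    have := Nat.odd_iff.mp hodd
    by_cases hik : k ≤ i ∧ 2 ∣ i - k
    · have hjk : ¬(k ≤ j ∧ 2 ∣ j - k) := by omega
      simp [monomialHermiteCoeff, hjk]
    · simp [monomialHermiteCoeff, hik]

lemma hermiteMoment_matrix_eq (p : ℕ) :
    (of fun i j : Fin p => hermiteMoment (i + j)) =
      of (fun i k : Fin p => monomialHermiteCoeff i k) *
        diagonal (fun k : Fin p => ((k : ℕ)! * 2 ^ (k : ℕ) : ℝ)) *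
        (of fun i k : Fin p => monomialHermiteCoeff i k)ᵀ := by
  ext i j
  rw [of_apply, mul_apply]
  simp only [mul_diagonal, of_apply, transpose_apply]
  rw [Fin.sum_univ_eq_sum_range
    (fun k => monomialHermiteCoeff i k * (k ! * 2 ^ k) * monomialHermiteCoeff j k),
    sum_monomialHermiteCoeff_mul_mul i.isLt j.isLt]

lemma det_monomialHermiteCoeff (p : ℕ) :
    (of fun i k : Fin p => monomialHermiteCoeff i k).det = 1 := by
  have hlower : (of fun i k : Fin p => monomialHermiteCoeff i k).IsLowerTriangular :=
    fun i k hik => monomialHermiteCoeff_of_lt hik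
  rw [det_of_isLowerTriangular _ hlower]
  simp [monomialHermiteCoeff_self]

lemma prod_range_factorial_mul_two_pow (p : ℕ) :
    ∏ k ∈ range p, (k ! * 2 ^ k : ℝ) = 2 ^ p.choose 2 * ∏ k ∈ range p, (k ! : ℝ) := by
  rw [prod_mul_distrib, prod_pow_eq_pow_sum, sum_range_id, ← Nat.choose_two_right, mul_comm]

theorem stmt8 (p : ℕ) :
    Matrix.det (Matrix.of fun i j : Fin p =>
        (-1:ℝ)^(((i : ℕ)+(j : ℕ))/2) * hermiteH ((i : ℕ)+(j : ℕ)) 0) =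
      2^(p.choose 2) * ∏ j ∈ Finset.range p, (j.factorial : ℝ) := by
  simp_rw [neg_one_pow_mul_hermiteH_zero]
  rw [hermiteMoment_matrix_eq, det_mul, det_mul, det_transpose, det_monomialHermiteCoeff,
    det_diagonal, Fin.prod_univ_eq_prod_range (fun k => (k ! * 2 ^ k : ℝ)),
    prod_range_factorial_mul_two_pow, one_mul, mul_one]
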